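/- Let C = Φ(𝒞) be a Z2Z4-linear code of binary length n = α+2β, where 𝒞 is a Z2Z4-additive code of type (α,β;γ,δ;κ), and set s = β−(γ−κ)−δ. Then: if s = 0, ker(C) = γ+2δ; if s = 1, ker(C) = γ+2δ−k̄ for some even integer k̄ with 0 ≤ k̄ ≤ 2⌈(δ−1)/2⌉; and if s ≥ 2, ker(C) ∈ {γ+δ, γ+δ+1, …, γ+2δ−2} ∪ {γ+2δ}. -/

import Mathlib

/-- The ambient group `Z2^α × Z4^β`, with componentwise ring structure
(so `u * v` is the componentwise product). -/
abbrev Amb (α β : ℕ) := (Fin α → ZMod 2) × (Fin β → ZMod 4)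

/-- The binary space `Z2^α × (Z2²)^β ≅ Z2^(α+2β)`. -/
abbrev Bin (α β : ℕ) := (Fin α → ZMod 2) × (Fin β → ZMod 2 × ZMod 2)

/-- The Gray map `φ : Z4 → Z2²` with `φ(0)=(0,0), φ(1)=(0,1), φ(2)=(1,1), φ(3)=(1,0)`. -/
def grayPair (y : ZMod 4) : ZMod 2 × ZMod 2 :=
  match y.val with
  | 0 => (0, 0)
  | 1 => (0, 1)
  | 2 => (1, 1)
  | _ => (1, 0)

/-- The extended Gray map `Φ : Z2^α × Z4^β → Z2^(α+2β)`. -/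
def Phi {α β : ℕ} (u : Amb α β) : Bin α β :=
  (u.1, fun i => grayPair (u.2 i))

/-- The kernel `K(C) = {x | x + C = C}` of a binary code. -/
def kernelK {α β : ℕ} (C : Set (Bin α β)) : Set (Bin α β) :=
  {x | (fun y => x + y) '' C = C}

/-- The rank of a binary code: the `Z2`-dimension of its linear span. -/
noncomputable def rankOf {α β : ℕ} (C : Set (Bin α β)) : ℕ :=
  Module.finrank (ZMod 2) (Submodule.span (ZMod 2) C)

/-- The dimension of the kernel of a binary code. -/
noncomputable def kerDim {α β : ℕ} (C : Set (Bin α β)) : ℕ :=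
  Module.finrank (ZMod 2) (Submodule.span (ZMod 2) (kernelK C))

/-- A `Z2Z4`-additive code `C ⊆ Z2^α × Z4^β` is of type `(α,β;γ,δ;κ)`:
`|C| = 2^(γ+2δ)`, the number of elements `x` with `2x = 0` is `2^(γ+δ)`, and `κ` is the
`Z2`-dimension of the projection onto the first `α` coordinates of `{x ∈ C | 2x = 0}`. -/
def IsTypeOf (α β γ δ κ : ℕ) (C : AddSubgroup (Amb α β)) : Prop :=
  Nat.card C = 2 ^ (γ + 2 * δ) ∧
  Nat.card {x : Amb α β | x ∈ C ∧ 2 • x = 0} = 2 ^ (γ + δ) ∧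
  Module.finrank (ZMod 2)
    (Submodule.span (ZMod 2) (Prod.fst '' {x : Amb α β | x ∈ C ∧ 2 • x = 0})) = κ

/-!
Since `Φ x + Φ y = Φ (x + y + 2 x y)`, the kernel of `Φ(𝒞)` is the image of
`𝒦 = {x ∈ 𝒞 | 2 x y ∈ 𝒞 for all y ∈ 𝒞}`, and `𝒞_b ≤ 𝒦 ≤ 𝒞` gives `γ + δ ≤ ker ≤ γ + 2δ`.
All products `2 x y` lie in `T = {0}^α × {0, 2}^β`, and counting inside `𝒞_b` shows that
`𝒞 ∩ T` has index `2^s` in `T`. If `s = 0` then `T ≤ 𝒞`, so `𝒦 = 𝒞`. If `s = 1`, then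
`(x, y) ↦ [2 x y ∉ 𝒞]` is an alternating biadditive `Z2`-valued form on `𝒞` with radical `𝒦`,
so `[𝒞 : 𝒦]` is a power of four. Finally, no binary code containing zero is the union of two
cosets of its kernel, which rules out `ker = γ + 2δ - 1`.
-/

open Pointwise

theorem Nat.exists_eq_two_pow_of_mul_eq_two_pow {a b n : ℕ} (h : a * b = 2 ^ n) :
    ∃ i j, a = 2 ^ i ∧ b = 2 ^ j ∧ i + j = n := by
  obtain ⟨i, -, rfl⟩ := (Nat.dvd_prime_pow Nat.prime_two).mp (Dvd.intro b h)
  obtain ⟨j, -, rfl⟩ := (Nat.dvd_prime_pow Nat.prime_two).mp (Dvd.intro_left _ h)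
  refine ⟨i, j, rfl, rfl, Nat.pow_right_injective le_rfl ?_⟩
  simp only [← h, pow_add]

theorem AddSubgroup.exists_addMonoidHom_zmod_two_of_index_eq_two {G : Type*} [AddGroup G]
    {H : AddSubgroup G} (h : H.index = 2) : ∃ χ : G →+ ZMod 2, ∀ g, χ g = 0 ↔ g ∈ H := by
  classical
  refine ⟨AddMonoidHom.mk' (fun g => if g ∈ H then 0 else 1) fun a b => ?_, fun g => ?_⟩
  · simp only [AddSubgroup.add_mem_iff_of_index_two h]
    split_ifs <;> simp_all [CharTwo.add_self_eq_zero]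
  · simp only [AddMonoidHom.mk'_apply]
    split_ifs with hg <;> simp [hg]

theorem AddSubgroup.card_inf_mul_relIndex {G : Type*} [AddGroup G] (H K : AddSubgroup G) :
    Nat.card ↥(H ⊓ K) * H.relIndex K = Nat.card K := by
  have h := AddSubgroup.relIndex_mul_relIndex ⊥ (H ⊓ K) K bot_le inf_le_right
  rwa [AddSubgroup.relIndex_bot_left, AddSubgroup.relIndex_bot_left,
    AddSubgroup.inf_relIndex_right] at h

section Stabilizer

variable {V : Type*} [AddCommGroup V]

theorem add_mem_of_mem_stabilizer {S : Set V} {k x : V} (hk : k ∈ AddAction.stabilizer V S)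
    (hx : x ∈ S) : k + x ∈ S := by
  rw [← AddAction.mem_stabilizer_iff.mp hk]
  exact Set.vadd_mem_vadd_set hx

theorem mem_stabilizer_of_vadd_subset [Module (ZMod 2) V] {S : Set V} {u : V}
    (h : u +ᵥ S ⊆ S) : u ∈ AddAction.stabilizer V S := by
  refine AddAction.mem_stabilizer_iff.mpr (h.antisymm ?_)
  calc S = u +ᵥ (u +ᵥ S) := by rw [vadd_vadd, ZModModule.add_self, zero_vadd]
    _ ⊆ u +ᵥ S := Set.vadd_set_mono h

theorem card_addSubgroup_eq_two_pow_finrank_span [Module (ZMod 2) V] [Finite V]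
    (H : AddSubgroup V) :
    Nat.card H = 2 ^ Module.finrank (ZMod 2) (Submodule.span (ZMod 2) (H : Set V)) := by
  have hspan : Submodule.span (ZMod 2) (H : Set V) = AddSubgroup.toZModSubmodule 2 H :=
    Submodule.span_eq (AddSubgroup.toZModSubmodule 2 H)
  rw [hspan, Module.natCard_eq_pow_finrank (K := ZMod 2), Nat.card_zmod]
  rfl

/-- In characteristic two, if `S` were the union `H ∪ (c + H)` of two cosets of its stabilizer `H`,
then `c + S = (c + H) ∪ (c + c + H) = S`, i.e. `c ∈ H`. -/
theorem ncard_ne_two_mul_card_stabilizer [Module (ZMod 2) V] [Finite V] {S : Set V}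
    (h0 : (0 : V) ∈ S) : S.ncard ≠ 2 * Nat.card (AddAction.stabilizer V S) := by
  set H := AddAction.stabilizer V S
  intro hcard
  have hHS : (H : Set V) ⊆ S := fun x hx => by simpa using add_mem_of_mem_stabilizer hx h0
  have hH : Nat.card H = (H : Set V).ncard := (Nat.card_coe_set_eq _).symm
  have hHpos : 0 < Nat.card H := Nat.card_pos
  obtain ⟨c, hcS, hcH⟩ : ∃ c ∈ S, c ∉ H := by
    by_contra! hsub
    have := Set.ncard_le_ncard (s := S) (t := H) hsub
    omega
  have hdisj : Disjoint (H : Set V) (c +ᵥ (H : Set V)) := by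
    rw [Set.disjoint_left]
    rintro _ hx ⟨k, hk, rfl⟩
    exact hcH (by simpa using H.sub_mem hx hk)
  have hS : (H : Set V) ∪ (c +ᵥ (H : Set V)) = S := by
    refine Set.eq_of_subset_of_ncard_le (Set.union_subset hHS ?_) ?_
    · rintro _ ⟨k, hk, rfl⟩
      simpa only [vadd_eq_add, add_comm k c] using add_mem_of_mem_stabilizer hk hcS
    · rw [Set.ncard_union_eq hdisj, Set.ncard_vadd_set]
      omega
  refine hcH (AddAction.mem_stabilizer_iff.mpr ?_)
  rw [← hS, Set.vadd_set_union, vadd_vadd, ZModModule.add_self, zero_vadd, Set.union_comm]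

end Stabilizer

section AlternatingForm

variable {A : Type*} [AddCommGroup A] (B : A →+ A →+ ZMod 2)

def radical (H : AddSubgroup A) : AddSubgroup A where
  carrier := {x | x ∈ H ∧ ∀ y ∈ H, B x y = 0}
  zero_mem' := ⟨H.zero_mem, fun y _ => by simp⟩
  add_mem' := fun ⟨hx, hxH⟩ ⟨hy, hyH⟩ =>
    ⟨H.add_mem hx hy, fun z hz => by simp [hxH z hz, hyH z hz]⟩
  neg_mem' := fun ⟨hx, hxH⟩ => ⟨H.neg_mem hx, fun z hz => by simp [hxH z hz]⟩

variable {B}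

theorem mem_radical {H : AddSubgroup A} {x : A} :
    x ∈ radical B H ↔ x ∈ H ∧ ∀ y ∈ H, B x y = 0 :=
  Iff.rfl

theorem apply_comm_of_alternating {H : AddSubgroup A} (hB : ∀ x ∈ H, B x x = 0) {x y : A}
    (hx : x ∈ H) (hy : y ∈ H) : B x y = B y x := by
  have h := hB (x + y) (H.add_mem hx hy)
  simp only [map_add, AddMonoidHom.add_apply, hB x hx, hB y hy, zero_add, add_zero] at h
  rw [← sub_eq_zero, ZModModule.sub_eq_add, add_comm, h]

section HyperbolicPair

variable {H : AddSubgroup A} {a b : A}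

theorem card_eq_four_mul_card_ker_prod_inf (hB : ∀ x ∈ H, B x x = 0) (ha : a ∈ H) (hb : b ∈ H)
    (hab : B a b = 1) :
    Nat.card H = 4 * Nat.card ↥(((B a).prod (B b)).ker ⊓ H) := by
  set ψ := (B a).prod (B b)
  have hba : B b a = 1 := by rw [← apply_comm_of_alternating hB ha hb, hab]
  have hmap : H.map ψ = ⊤ := by
    refine eq_top_iff.mpr fun z _ => ?_
    have hz : z = z.2.val • ψ a + z.1.val • ψ b := by
      revert z; simp [ψ, hB a ha, hB b hb, hab, hba]
    rw [hz]
    exact add_mem (nsmul_mem (AddSubgroup.mem_map_of_mem ψ ha) _)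
      (nsmul_mem (AddSubgroup.mem_map_of_mem ψ hb) _)
  rw [← AddSubgroup.card_inf_mul_relIndex ψ.ker H, AddSubgroup.relIndex_ker, hmap,
    AddSubgroup.card_top, Nat.card_prod, Nat.card_zmod, mul_comm]

theorem radical_ker_prod_inf (hB : ∀ x ∈ H, B x x = 0) (ha : a ∈ H) (hb : b ∈ H)
    (hab : B a b = 1) :
    radical B (((B a).prod (B b)).ker ⊓ H) = radical B H := by
  have hba : B b a = 1 := by rw [← apply_comm_of_alternating hB ha hb, hab]
  have hmem : ∀ {x}, x ∈ ((B a).prod (B b)).ker ⊓ H ↔ x ∈ H ∧ B a x = 0 ∧ B b x = 0 := by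
    intro x
    simp [AddSubgroup.mem_inf, AddMonoidHom.mem_ker, Prod.ext_iff, and_comm]
  ext x
  simp only [mem_radical, hmem]
  constructor
  · rintro ⟨⟨hx, hax, hbx⟩, hxH⟩
    refine ⟨hx, fun y hy => ?_⟩
    -- `y` minus its components along `a` and `b` is orthogonal to both.
    set y' := y - (B b y).val • a - (B a y).val • b
    have hy' : y' ∈ H ∧ B a y' = 0 ∧ B b y' = 0 := by
      refine ⟨H.sub_mem (H.sub_mem hy (H.nsmul_mem ha _)) (H.nsmul_mem hb _), ?_, ?_⟩ <;>
        simp [y', hB a ha, hB b hb, hab, hba]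
    have hxa : B x a = 0 := by rw [apply_comm_of_alternating hB hx ha, hax]
    have hxb : B x b = 0 := by rw [apply_comm_of_alternating hB hx hb, hbx]
    have hyy : y = y' + (B b y).val • a + (B a y).val • b := by simp only [y']; abel
    rw [hyy]
    simp [hxH y' hy', hxa, hxb]
  · rintro ⟨hx, hxH⟩
    refine ⟨⟨hx, ?_, ?_⟩, fun y hy => hxH y hy.1⟩
    · rw [apply_comm_of_alternating hB ha hx, hxH a ha]
    · rw [apply_comm_of_alternating hB hb hx, hxH b hb]

end HyperbolicPair

theorem exists_card_eq_four_pow_mul_card_radical [Finite A] (H : AddSubgroup A)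
    (hB : ∀ x ∈ H, B x x = 0) : ∃ m, Nat.card H = 4 ^ m * Nat.card (radical B H) := by
  induction hn : Nat.card H using Nat.strong_induction_on generalizing H with
  | _ n ih =>
  by_cases hdeg : ∀ x ∈ H, ∀ y ∈ H, B x y = 0
  · refine ⟨0, ?_⟩
    rw [← hn, pow_zero, one_mul]
    congr
    ext x
    exact ⟨fun hx => ⟨hx, hdeg x hx⟩, fun hx => hx.1⟩
  push Not at hdeg
  obtain ⟨a, ha, b, hb, hab⟩ := hdeg
  replace hab : B a b = 1 := Fin.eq_one_of_ne_zero _ hab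
  have hcard := card_eq_four_mul_card_ker_prod_inf hB ha hb hab
  have hpos : 0 < Nat.card ↥(((B a).prod (B b)).ker ⊓ H) := Nat.card_pos
  obtain ⟨m, hm⟩ := ih _ (by omega) (((B a).prod (B b)).ker ⊓ H) (fun x hx => hB x hx.2) rfl
  refine ⟨m + 1, ?_⟩
  rw [← hn, hcard, hm,
    radical_ker_prod_inf hB ha hb hab, pow_succ]
  ring

end AlternatingForm

section GrayMap

variable {α β : ℕ}

theorem grayPair_add (a b : ZMod 4) :
    grayPair a + grayPair b = grayPair (a + b + 2 • (a * b)) := by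
  revert a b; decide

theorem grayPair_injective : Function.Injective grayPair := by
  intro a b; revert a b; decide

theorem Phi_zero : Phi (0 : Amb α β) = 0 := rfl

theorem Phi_injective : Function.Injective (Phi (α := α) (β := β)) := by
  intro x y h
  simp only [Phi, Prod.mk.injEq] at h
  exact Prod.ext h.1 (funext fun i => grayPair_injective (congrFun h.2 i))

theorem Phi_add (x y : Amb α β) : Phi x + Phi y = Phi (x + y + 2 • (x * y)) := by
  have h2 : ∀ a b : ZMod 2, a + b = a + b + 2 • (a * b) := by decide
  exact Prod.ext (funext fun i => h2 (x.1 i) (y.1 i))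
    (funext fun i => grayPair_add (x.2 i) (y.2 i))

theorem two_nsmul_mul_self (x : Amb α β) : 2 • (x * x) = 2 • x := by
  have h2 : ∀ a : ZMod 2, 2 • (a * a) = 2 • a := by decide
  have h4 : ∀ a : ZMod 4, 2 • (a * a) = 2 • a := by decide
  exact Prod.ext (funext fun i => h2 (x.1 i)) (funext fun i => h4 (x.2 i))

variable (α β) in
/-- The subgroup `T = {0}^α × {0, 2}^β`. -/
def orderTwoZ4 : AddSubgroup (Amb α β) :=
  (AddMonoidHom.fst _ _).ker ⊓ (nsmulAddMonoidHom 2).ker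

theorem mem_orderTwoZ4 {z : Amb α β} : z ∈ orderTwoZ4 α β ↔ z.1 = 0 ∧ 2 • z = 0 :=
  Iff.rfl

theorem two_nsmul_mem_orderTwoZ4 (w : Amb α β) : 2 • w ∈ orderTwoZ4 α β := by
  have h2 : ∀ a : ZMod 2, 2 • a = 0 := by decide
  have h2' : ∀ a : ZMod 2, 2 • 2 • a = 0 := by decide
  have h4 : ∀ a : ZMod 4, 2 • 2 • a = 0 := by decide
  exact ⟨funext fun i => h2 (w.1 i),
    Prod.ext (funext fun i => h2' (w.1 i)) (funext fun i => h4 (w.2 i))⟩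

theorem card_orderTwoZ4 : Nat.card (orderTwoZ4 α β) = 2 ^ β := by
  let e : orderTwoZ4 α β ≃ (Fin β → {c : ZMod 4 // 2 • c = 0}) :=
    { toFun z i := ⟨z.1.2 i, congrFun (congrArg Prod.snd (mem_orderTwoZ4.mp z.2).2) i⟩
      invFun f := ⟨(0, fun i => f i),
        mem_orderTwoZ4.mpr ⟨rfl, Prod.ext (smul_zero 2) (funext fun i => (f i).2)⟩⟩
      left_inv z := Subtype.ext (Prod.ext (mem_orderTwoZ4.mp z.2).1.symm rfl)
      right_inv f := rfl }
  rw [Nat.card_congr e, Nat.card_pi, Finset.prod_const, Finset.card_univ, Fintype.card_fin,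
    Nat.card_eq_fintype_card]
  rfl

end GrayMap

section AdditiveKernel

variable {α β : ℕ} (C : AddSubgroup (Amb α β))

def additiveKernel : AddSubgroup (Amb α β) where
  carrier := {x | x ∈ C ∧ ∀ y ∈ C, 2 • (x * y) ∈ C}
  zero_mem' := ⟨C.zero_mem, fun y _ => by simp⟩
  add_mem' := fun ⟨hx, hxC⟩ ⟨hy, hyC⟩ =>
    ⟨C.add_mem hx hy, fun z hz => by simpa [add_mul] using C.add_mem (hxC z hz) (hyC z hz)⟩
  neg_mem' := fun ⟨hx, hxC⟩ => ⟨C.neg_mem hx, fun z hz => by simpa using C.neg_mem (hxC z hz)⟩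

variable {C}

theorem mem_additiveKernel {x : Amb α β} :
    x ∈ additiveKernel C ↔ x ∈ C ∧ ∀ y ∈ C, 2 • (x * y) ∈ C :=
  Iff.rfl

theorem additiveKernel_le : additiveKernel C ≤ C := fun _ hx => hx.1

theorem inf_ker_two_nsmul_le_additiveKernel :
    C ⊓ (nsmulAddMonoidHom 2).ker ≤ additiveKernel C := fun x ⟨hx, hx2⟩ =>
  ⟨hx, fun y _ => by
    rw [← smul_mul_assoc, show 2 • x = 0 from hx2, zero_mul]; exact C.zero_mem⟩

theorem additiveKernel_eq_self_of_le (hT : orderTwoZ4 α β ≤ C) : additiveKernel C = C :=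
  additiveKernel_le.antisymm fun x hx =>
    ⟨hx, fun y _ => hT (two_nsmul_mem_orderTwoZ4 (x * y))⟩

theorem exists_card_eq_four_pow_mul_card_additiveKernel
    (hC : C.relIndex (orderTwoZ4 α β) = 2) :
    ∃ m, Nat.card C = 4 ^ m * Nat.card (additiveKernel C) := by
  obtain ⟨χ, hχ⟩ := AddSubgroup.exists_addMonoidHom_zmod_two_of_index_eq_two hC
  let B : Amb α β →+ Amb α β →+ ZMod 2 := AddMonoidHom.mul.compr₂
    (χ.comp ((nsmulAddMonoidHom 2).codRestrict _ two_nsmul_mem_orderTwoZ4))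
  have hB : ∀ x y, B x y = 0 ↔ 2 • (x * y) ∈ C := fun x y => hχ _
  have hrad : radical B C = additiveKernel C := by
    ext x
    simp only [mem_radical, mem_additiveKernel, hB]
  rw [← hrad]
  refine exists_card_eq_four_pow_mul_card_radical C fun x hx => (hB x x).mpr ?_
  rw [two_nsmul_mul_self]
  exact C.nsmul_mem hx 2

theorem coe_stabilizer_image_Phi :
    (AddAction.stabilizer (Bin α β) (Phi '' (C : Set (Amb α β))) : Set (Bin α β)) =
      Phi '' (additiveKernel C : Set (Amb α β)) := by
  ext u
  constructor
  · intro hu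
    obtain ⟨x, hx, rfl⟩ : u ∈ Phi '' C := by
      simpa using add_mem_of_mem_stabilizer hu ⟨0, C.zero_mem, Phi_zero⟩
    refine ⟨x, ⟨hx, fun y hy => ?_⟩, rfl⟩
    obtain ⟨z, hz, hxyz⟩ := add_mem_of_mem_stabilizer hu ⟨y, hy, rfl⟩
    rw [Phi_add] at hxyz
    rw [Phi_injective hxyz] at hz
    simpa using C.sub_mem hz (C.add_mem hx hy)
  · rintro ⟨x, ⟨hx, hxC⟩, rfl⟩
    refine mem_stabilizer_of_vadd_subset ?_
    rintro _ ⟨_, ⟨y, hy, rfl⟩, rfl⟩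
    exact ⟨_, C.add_mem (C.add_mem hx hy) (hxC y hy), (Phi_add x y).symm⟩

theorem card_stabilizer_image_Phi :
    Nat.card (AddAction.stabilizer (Bin α β) (Phi '' (C : Set (Amb α β)))) =
      Nat.card (additiveKernel C) := by
  change Nat.card (AddAction.stabilizer (Bin α β) (Phi '' (C : Set (Amb α β))) : Set (Bin α β)) =
    Nat.card (additiveKernel C : Set (Amb α β))
  rw [coe_stabilizer_image_Phi, Nat.card_image_of_injective Phi_injective]

end AdditiveKernel

section KernelDimension

variable {α β : ℕ}

theorem kernelK_eq_stabilizer (S : Set (Bin α β)) :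
    kernelK S = AddAction.stabilizer (Bin α β) S :=
  rfl

theorem two_pow_kerDim (S : Set (Bin α β)) :
    2 ^ kerDim S = Nat.card (AddAction.stabilizer (Bin α β) S) := by
  rw [kerDim, kernelK_eq_stabilizer, card_addSubgroup_eq_two_pow_finrank_span]

theorem two_pow_kerDim_add_one_ne_ncard {S : Set (Bin α β)} (h0 : 0 ∈ S) :
    2 ^ (kerDim S + 1) ≠ S.ncard := by
  rw [pow_succ, two_pow_kerDim, mul_comm]
  exact (ncard_ne_two_mul_card_stabilizer h0).symm

variable {C : AddSubgroup (Amb α β)} {n : ℕ}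

theorem two_pow_kerDim_image_Phi :
    2 ^ kerDim (Phi '' (C : Set (Amb α β))) = Nat.card (additiveKernel C) := by
  rw [two_pow_kerDim, card_stabilizer_image_Phi]

theorem kerDim_image_Phi_eq_of_orderTwoZ4_le (hT : orderTwoZ4 α β ≤ C)
    (hC : Nat.card C = 2 ^ n) : kerDim (Phi '' (C : Set (Amb α β))) = n :=
  Nat.pow_right_injective le_rfl <| by
    simp only [two_pow_kerDim_image_Phi, additiveKernel_eq_self_of_le hT, hC]

theorem kerDim_image_Phi_add_one_ne (hC : Nat.card C = 2 ^ n) :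
    kerDim (Phi '' (C : Set (Amb α β))) + 1 ≠ n := by
  rintro rfl
  refine two_pow_kerDim_add_one_ne_ncard (S := Phi '' (C : Set (Amb α β)))
    ⟨0, C.zero_mem, Phi_zero⟩ ?_
  rw [Set.ncard_image_of_injective _ Phi_injective, ← hC]
  rfl

theorem exists_kerDim_image_Phi_add_two_mul_eq (hT : C.relIndex (orderTwoZ4 α β) = 2)
    (hC : Nat.card C = 2 ^ n) : ∃ m, kerDim (Phi '' (C : Set (Amb α β))) + 2 * m = n := by
  obtain ⟨m, hm⟩ := exists_card_eq_four_pow_mul_card_additiveKernel hT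
  refine ⟨m, Nat.pow_right_injective le_rfl ?_⟩
  simp only [← hC, hm, ← two_pow_kerDim_image_Phi, pow_add, pow_mul]
  norm_num [mul_comm]

end KernelDimension

namespace IsTypeOf

variable {α β γ δ κ : ℕ} {C : AddSubgroup (Amb α β)}

theorem card_inf_ker_two_nsmul (h : IsTypeOf α β γ δ κ C) :
    Nat.card ↥(C ⊓ (nsmulAddMonoidHom 2).ker) = 2 ^ (γ + δ) :=
  h.2.1

theorem card_inf_orderTwoZ4_mul (h : IsTypeOf α β γ δ κ C) :
    Nat.card ↥(C ⊓ orderTwoZ4 α β) * 2 ^ κ = 2 ^ (γ + δ) := by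
  set Cb := C ⊓ (nsmulAddMonoidHom 2).ker
  have hinf : (AddMonoidHom.fst _ _).ker ⊓ Cb = C ⊓ orderTwoZ4 α β := by
    ext x
    simp only [Cb, orderTwoZ4, AddSubgroup.mem_inf]
    tauto
  have hmap : Nat.card (Cb.map (AddMonoidHom.fst _ _)) = 2 ^ κ := by
    rw [card_addSubgroup_eq_two_pow_finrank_span, AddSubgroup.coe_map]
    exact congrArg _ h.2.2
  rw [← hinf, ← hmap, ← AddSubgroup.relIndex_ker, AddSubgroup.card_inf_mul_relIndex,
    h.card_inf_ker_two_nsmul]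

theorem two_pow_le_card_inf_orderTwoZ4 (h : IsTypeOf α β γ δ κ C) :
    2 ^ δ ≤ Nat.card ↥(C ⊓ orderTwoZ4 α β) := by
  have hcard := AddSubgroup.card_inf_mul_relIndex (nsmulAddMonoidHom 2).ker C
  rw [inf_comm, h.card_inf_ker_two_nsmul, AddSubgroup.relIndex_ker, h.1,
    show γ + 2 * δ = γ + δ + δ by ring, pow_add (a := 2) (γ + δ) δ] at hcard
  calc 2 ^ δ = Nat.card (C.map (nsmulAddMonoidHom 2)) :=
        (Nat.eq_of_mul_eq_mul_left (pow_pos two_pos _) hcard).symm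
    _ ≤ _ := AddSubgroup.card_le_of_le <| by
        rintro _ ⟨x, hx, rfl⟩
        exact ⟨C.nsmul_mem hx 2, two_nsmul_mem_orderTwoZ4 x⟩

theorem relIndex_orderTwoZ4 (h : IsTypeOf α β γ δ κ C) :
    C.relIndex (orderTwoZ4 α β) = 2 ^ (β - (γ - κ) - δ) := by
  obtain ⟨j, k, hj, hk, hjk⟩ := Nat.exists_eq_two_pow_of_mul_eq_two_pow h.card_inf_orderTwoZ4_mul
  obtain ⟨j', i, hj', hi, hji⟩ := Nat.exists_eq_two_pow_of_mul_eq_two_pow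
    ((AddSubgroup.card_inf_mul_relIndex C _).trans card_orderTwoZ4)
  have hδj : δ ≤ j :=
    (pow_le_pow_iff_right₀ one_lt_two).mp (hj ▸ h.two_pow_le_card_inf_orderTwoZ4)
  have hkκ : k = κ := Nat.pow_right_injective le_rfl hk.symm
  have hjj : j' = j := Nat.pow_right_injective le_rfl (hj'.symm.trans hj)
  exact hi.trans (congrArg _ (by omega))

theorem kerDim_image_Phi_mem_Icc (h : IsTypeOf α β γ δ κ C) :
    kerDim (Phi '' (C : Set (Amb α β))) ∈ Set.Icc (γ + δ) (γ + 2 * δ) := by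
  constructor
  · rw [← pow_le_pow_iff_right₀ Nat.one_lt_two, two_pow_kerDim_image_Phi,
      ← h.card_inf_ker_two_nsmul]
    exact AddSubgroup.card_le_of_le inf_ker_two_nsmul_le_additiveKernel
  · rw [← pow_le_pow_iff_right₀ Nat.one_lt_two, two_pow_kerDim_image_Phi, ← h.1]
    exact AddSubgroup.card_le_of_le additiveKernel_le

end IsTypeOf

/-- kernel dimensions depending on `s = β−(γ−κ)−δ`. -/
theorem kernel_dim_range_refined (α β γ δ κ : ℕ) (C : AddSubgroup (Amb α β))
    (h : IsTypeOf α β γ δ κ C) :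
    (β - (γ - κ) - δ = 0 → kerDim (Phi '' (C : Set (Amb α β))) = γ + 2 * δ) ∧
    (β - (γ - κ) - δ = 1 →
      ∃ kb : ℕ, Even kb ∧ kb ≤ 2 * (δ / 2) ∧
        kerDim (Phi '' (C : Set (Amb α β))) + kb = γ + 2 * δ) ∧
    (2 ≤ β - (γ - κ) - δ →
      (γ + δ ≤ kerDim (Phi '' (C : Set (Amb α β))) ∧
          kerDim (Phi '' (C : Set (Amb α β))) + 2 ≤ γ + 2 * δ) ∨
        kerDim (Phi '' (C : Set (Amb α β))) = γ + 2 * δ) := by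
  have hrel := h.relIndex_orderTwoZ4
  obtain ⟨hlow, hhigh⟩ := h.kerDim_image_Phi_mem_Icc
  refine ⟨fun hs => ?_, fun hs => ?_, fun _ => ?_⟩
  · rw [hs, pow_zero, AddSubgroup.relIndex_eq_one] at hrel
    exact kerDim_image_Phi_eq_of_orderTwoZ4_le hrel h.1
  · rw [hs, pow_one] at hrel
    obtain ⟨m, hm⟩ := exists_kerDim_image_Phi_add_two_mul_eq hrel h.1
    exact ⟨2 * m, even_two_mul m, by omega, hm⟩
  · have := kerDim_image_Phi_add_one_ne h.1
    omega
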